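/- arXiv:2410.19237 — 2 statements merged into one kernel-verified Lean document; each statement's English description precedes it below -/
import Mathlib

section
/- Fix an integer n ≥ 2 and set b := -n + i. Let D ⊆ {0, 1, …, n²} satisfy |d − d'| ≠ 1 for all d, d' ∈ D. Let k ≥ 1 and let (d_1, …, d_k) and (d'_1, …, d'_k) be tuples with all d_j, d'_j ∈ D such that d_j ≠ d'_j for some index 1 ≤ j ≤ k. Then the k-tiles T_{d_1…d_k} and T_{d'_1…d'_k} of T_n are disjoint. -/
open Complex Filter Pointwise

/-- `piSum b d = ∑_{j≥1} d_j b^{-j}` (0-indexed: `d j` is the `(j+1)`-st digit). -/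
noncomputable def piSum (b : ℂ) (d : ℕ → ℤ) : ℂ :=
  ∑' j : ℕ, (d j : ℂ) * b ^ (-((j : ℤ) + 1))

/-- The `n`-th fundamental tile `T_n`. -/
def fundTile (n : ℕ) : Set ℂ :=
  {z | ∃ d : ℕ → ℤ, (∀ j, 0 ≤ d j ∧ d j ≤ (n : ℤ) ^ 2) ∧
    z = piSum (-(n : ℂ) + Complex.I) d}

/-- The `k`-tile of a set `T` with digits `d_1, …, d_k` (0-indexed). -/
def kTile (b : ℂ) (T : Set ℂ) (k : ℕ) (d : Fin k → ℤ) : Set ℂ :=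
  {z | ∃ t ∈ T, z = (∑ j : Fin k, (d j : ℂ) * b ^ (-((j : ℤ) + 1))) + b ^ (-(k : ℤ)) * t}

/-
Points of two k-tiles coincide only if two expansions `∑ f_j b^{-j-1}`, `∑ g_j b^{-j-1}` with
digits in `[0, n²]` are equal. Multiplying by `b`, the difference of the leading digits becomes an
integer `c` that is itself an expansion with digits bounded by `n²` in absolute value. For such `c`,
the expansion `b c - c₀` has imaginary part `c`; self-similarity gives a linear system for the
suprema of `|Im|` and `|Re|` over all these expansions, whose solution is `< 2` for `n ≥ 3` and
`≤ 5/2` for `n = 2` (where one more multiplication by `b` is needed). Hence `|c| ≤ 1`, the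
separation of `D` forces `c = 0`, and one inducts on the remaining digits.
-/

open Set

section DigitExpansion

variable {b : ℂ} {M : ℤ} {f g : ℕ → ℤ}

lemma zpow_neg_natCast_add_one (b : ℂ) (j : ℕ) : b ^ (-((j : ℤ) + 1)) = b⁻¹ ^ (j + 1) := by
  rw [inv_pow, ← zpow_natCast, ← zpow_neg]
  push_cast
  rfl

lemma piSum_eq_tsum (b : ℂ) (f : ℕ → ℤ) :
    piSum b f = ∑' j, (f j : ℂ) * b⁻¹ ^ (j + 1) := by
  simp only [piSum, zpow_neg_natCast_add_one]

lemma hasSum_mul_inv_norm_pow_succ (hb : 1 < ‖b‖) :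
    HasSum (fun j : ℕ => (M : ℝ) * ‖b‖⁻¹ ^ (j + 1)) (M / (‖b‖ - 1)) := by
  have hr : ‖b‖⁻¹ < 1 := inv_lt_one_of_one_lt₀ hb
  have hsum : (M : ℝ) * ‖b‖⁻¹ * (1 - ‖b‖⁻¹)⁻¹ = M / (‖b‖ - 1) := by
    have : ‖b‖ - 1 ≠ 0 := by linarith
    field_simp
  rw [← hsum]
  simpa only [pow_succ', mul_assoc] using
    (hasSum_geometric_of_lt_one (by positivity) hr).mul_left ((M : ℝ) * ‖b‖⁻¹)

lemma norm_digitTerm_le (hf : ∀ j, |f j| ≤ M) (j : ℕ) :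
    ‖(f j : ℂ) * b⁻¹ ^ (j + 1)‖ ≤ M * ‖b‖⁻¹ ^ (j + 1) := by
  rw [norm_mul, norm_pow, norm_inv, Complex.norm_intCast]
  gcongr
  exact_mod_cast hf j

lemma summable_digitTerms (hb : 1 < ‖b‖) (hf : ∀ j, |f j| ≤ M) :
    Summable fun j => (f j : ℂ) * b⁻¹ ^ (j + 1) :=
  .of_norm_bounded (hasSum_mul_inv_norm_pow_succ hb).summable (norm_digitTerm_le hf)

lemma norm_piSum_le (hb : 1 < ‖b‖) (hf : ∀ j, |f j| ≤ M) :
    ‖piSum b f‖ ≤ M / (‖b‖ - 1) := by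
  rw [piSum_eq_tsum]
  exact tsum_of_norm_bounded (hasSum_mul_inv_norm_pow_succ hb) (norm_digitTerm_le hf)

lemma piSum_sub (hb : 1 < ‖b‖) (hf : ∀ j, |f j| ≤ M) (hg : ∀ j, |g j| ≤ M) :
    piSum b (f - g) = piSum b f - piSum b g := by
  simp only [piSum_eq_tsum, Pi.sub_apply, Int.cast_sub, sub_mul]
  exact (summable_digitTerms hb hf).tsum_sub (summable_digitTerms hb hg)

lemma piSum_eq_sum_add_pow_mul (hb : 1 < ‖b‖) (hf : ∀ j, |f j| ≤ M) (k : ℕ) :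
    piSum b f = ∑ j ∈ Finset.range k, (f j : ℂ) * b⁻¹ ^ (j + 1)
      + b⁻¹ ^ k * piSum b (fun j => f (j + k)) := by
  simp only [piSum_eq_tsum, ← tsum_mul_left]
  rw [← (summable_digitTerms hb hf).sum_add_tsum_nat_add k]
  congr 1
  refine tsum_congr fun j => ?_
  ring

lemma mul_piSum (hb : 1 < ‖b‖) (hf : ∀ j, |f j| ≤ M) :
    b * piSum b f = f 0 + piSum b (fun j => f (j + 1)) := by
  have hb0 : b ≠ 0 := norm_pos_iff.mp (one_pos.trans hb)
  rw [piSum_eq_sum_add_pow_mul hb hf 1]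
  simp only [Finset.range_one, Finset.sum_singleton, zero_add, pow_one]
  field_simp

end DigitExpansion

section DigitSums

variable {b : ℂ} {M : ℤ} {z : ℂ}

def digitSums (b : ℂ) (M : ℤ) : Set ℂ :=
  {z | ∃ f : ℕ → ℤ, (∀ j, |f j| ≤ M) ∧ piSum b f = z}

lemma zero_mem_digitSums (hM : 0 ≤ M) : (0 : ℂ) ∈ digitSums b M :=
  ⟨0, fun _ => by simpa using hM, by simp [piSum]⟩

lemma exists_mul_eq_add_of_mem_digitSums (hb : 1 < ‖b‖) (hz : z ∈ digitSums b M) :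
    ∃ c : ℤ, |c| ≤ M ∧ ∃ w ∈ digitSums b M, b * z = c + w := by
  obtain ⟨f, hf, rfl⟩ := hz
  exact ⟨f 0, hf 0, _, ⟨_, fun j => hf (j + 1), rfl⟩, mul_piSum hb hf⟩

noncomputable def imSup (b : ℂ) (M : ℤ) : ℝ :=
  sSup ((fun z : ℂ => |z.im|) '' digitSums b M)

noncomputable def reSup (b : ℂ) (M : ℤ) : ℝ :=
  sSup ((fun z : ℂ => |z.re|) '' digitSums b M)

lemma abs_im_le_imSup (hb : 1 < ‖b‖) (hz : z ∈ digitSums b M) : |z.im| ≤ imSup b M := by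
  refine le_csSup ⟨M / (‖b‖ - 1), ?_⟩ (mem_image_of_mem _ hz)
  rintro _ ⟨_, ⟨f, hf, rfl⟩, rfl⟩
  exact (abs_im_le_norm _).trans (norm_piSum_le hb hf)

lemma abs_re_le_reSup (hb : 1 < ‖b‖) (hz : z ∈ digitSums b M) : |z.re| ≤ reSup b M := by
  refine le_csSup ⟨M / (‖b‖ - 1), ?_⟩ (mem_image_of_mem _ hz)
  rintro _ ⟨_, ⟨f, hf, rfl⟩, rfl⟩
  exact (abs_re_le_norm _).trans (norm_piSum_le hb hf)

lemma imSup_le {C : ℝ} (hM : 0 ≤ M) (h : ∀ z ∈ digitSums b M, |z.im| ≤ C) :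
    imSup b M ≤ C :=
  csSup_le ((nonempty_of_mem (zero_mem_digitSums hM)).image _) (forall_mem_image.2 h)

lemma reSup_le {C : ℝ} (hM : 0 ≤ M) (h : ∀ z ∈ digitSums b M, |z.re| ≤ C) :
    reSup b M ≤ C :=
  csSup_le ((nonempty_of_mem (zero_mem_digitSums hM)).image _) (forall_mem_image.2 h)

end DigitSums

section GaussianBase

variable {n : ℕ} {z : ℂ}

lemma one_lt_norm_base (hn : 1 ≤ n) : 1 < ‖-(n : ℂ) + I‖ := by
  refine lt_of_pow_lt_pow_left₀ 2 (norm_nonneg _) ?_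
  have : (1 : ℝ) ≤ n := by exact_mod_cast hn
  rw [one_pow, Complex.sq_norm, normSq_apply]
  simp only [add_re, neg_re, natCast_re, I_re, add_im, neg_im, natCast_im, I_im]
  nlinarith

lemma abs_im_re_le_of_mem_digitSums_base (hn : 1 ≤ n)
    (hz : z ∈ digitSums (-(n : ℂ) + I) (n ^ 2)) :
    ((n : ℝ) ^ 2 + 1) * |z.im| ≤ n ^ 2 + reSup (-(n : ℂ) + I) (n ^ 2)
        + n * imSup (-(n : ℂ) + I) (n ^ 2) ∧
      ((n : ℝ) ^ 2 + 1) * |z.re| ≤ n ^ 3 + n * reSup (-(n : ℂ) + I) (n ^ 2)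
        + imSup (-(n : ℂ) + I) (n ^ 2) := by
  have hb := one_lt_norm_base hn
  obtain ⟨c, hc, w, hw, hmul⟩ := exists_mul_eq_add_of_mem_digitSums hb hz
  have hre : -n * z.re - z.im = c + w.re := by simpa using congrArg re hmul
  have him : -(n * z.im) + z.re = w.im := by simpa using congrArg im hmul
  have hc : |(c : ℝ)| ≤ n ^ 2 := by exact_mod_cast hc
  have hwre := abs_re_le_reSup hb hw
  have hwim := abs_im_le_imSup hb hw
  have hn0 : (0 : ℝ) ≤ n := n.cast_nonneg
  have hzim : ((n : ℝ) ^ 2 + 1) * z.im = -n * w.im - c - w.re := by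
    linear_combination -n * him - hre
  have hzre : ((n : ℝ) ^ 2 + 1) * z.re = w.im - n * (c + w.re) := by
    linear_combination him - n * hre
  rw [abs_le] at hc hwre hwim
  constructor <;> rw [← abs_of_pos (by positivity : (0 : ℝ) < n ^ 2 + 1), ← abs_mul, abs_le]
  · rw [hzim]; constructor <;> nlinarith
  · rw [hzre]; constructor <;> nlinarith

lemma imSup_base_mul_le (hn : 1 ≤ n) :
    (((n : ℝ) ^ 2 - n + 1) ^ 2 - 1) * imSup (-(n : ℂ) + I) (n ^ 2)
      ≤ ((n : ℝ) ^ 2 - n + 1) * n ^ 2 + n ^ 3 := by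
  have hM : (0 : ℤ) ≤ n ^ 2 := by positivity
  set sIm := imSup (-(n : ℂ) + I) (n ^ 2)
  set sRe := reSup (-(n : ℂ) + I) (n ^ 2)
  have hq : (0 : ℝ) < n ^ 2 + 1 := by positivity
  have hI : ((n : ℝ) ^ 2 + 1) * sIm ≤ n ^ 2 + sRe + n * sIm := by
    rw [← le_div_iff₀' hq]
    exact imSup_le hM fun z hz => (le_div_iff₀' hq).2 (abs_im_re_le_of_mem_digitSums_base hn hz).1
  have hX : ((n : ℝ) ^ 2 + 1) * sRe ≤ n ^ 3 + n * sRe + sIm := by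
    rw [← le_div_iff₀' hq]
    exact reSup_le hM fun z hz => (le_div_iff₀' hq).2 (abs_im_re_le_of_mem_digitSums_base hn hz).2
  have hu : (0 : ℝ) ≤ n ^ 2 - n + 1 := by nlinarith
  nlinarith [mul_le_mul_of_nonneg_left hI hu]

lemma imSup_base_lt_two (hn : 3 ≤ n) : imSup (-(n : ℂ) + I) (n ^ 2) < 2 := by
  have h := imSup_base_mul_le (n := n) (by omega)
  have hn : (3 : ℝ) ≤ n := by exact_mod_cast hn
  have hu : (7 : ℝ) ≤ n ^ 2 - n + 1 := by nlinarith
  have hpos : (0 : ℝ) < ((n : ℝ) ^ 2 - n + 1) ^ 2 - 1 := by nlinarith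
  -- `2 ((n²-n+1)² - 1) - ((n²-n+1) n² + n³) = n ((n-3)(n²-n+2) + 2)`
  have hgap : ((n : ℝ) ^ 2 - n + 1) * n ^ 2 + n ^ 3 < 2 * (((n : ℝ) ^ 2 - n + 1) ^ 2 - 1) := by
    nlinarith [mul_nonneg (by linarith : (0 : ℝ) ≤ n - 3)
      (by nlinarith : (0 : ℝ) ≤ n ^ 2 - n + 2)]
  by_contra! h2
  nlinarith

lemma abs_le_one_of_intCast_mem_digitSums_base (hn : 2 ≤ n) {c : ℤ}
    (hc : (c : ℂ) ∈ digitSums (-(n : ℂ) + I) (n ^ 2)) : |c| ≤ 1 := by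
  have hb := one_lt_norm_base (n := n) (by omega)
  obtain ⟨c₀, hc₀, w, hw, hmul⟩ := exists_mul_eq_add_of_mem_digitSums hb hc
  have hwre : -(n * c) = c₀ + w.re := by simpa using congrArg re hmul
  have hwim : (c : ℝ) = w.im := by simpa using congrArg im hmul
  rcases (show n = 2 ∨ 3 ≤ n by omega) with rfl | hn3
  · obtain ⟨_, _, w', hw', hmul'⟩ := exists_mul_eq_add_of_mem_digitSums hb hw
    have hw'im : -(2 * w.im) + w.re = w'.im := by simpa using congrArg im hmul'
    have h := (abs_im_le_imSup hb hw').trans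
      ((le_div_iff₀' (by norm_num)).2 (imSup_base_mul_le (n := 2) (by norm_num)))
    have hw'c : w'.im = -((4 * c + c₀ : ℤ) : ℝ) := by
      push_cast at hwre ⊢
      linarith
    rw [hw'c, abs_neg, ← Int.cast_abs] at h
    have h4 : |4 * c + c₀| < 3 := by
      have : ((|4 * c + c₀| : ℤ) : ℝ) < 3 := by linarith
      exact_mod_cast this
    have hc₀ : |c₀| ≤ 4 := by simpa using hc₀
    rw [abs_le] at hc₀ ⊢
    rw [abs_lt] at h4
    omega
  · have h : |(c : ℝ)| < 2 := hwim ▸ (abs_im_le_imSup hb hw).trans_lt (imSup_base_lt_two hn3)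
    rw [← Int.cast_abs] at h
    have h : |c| < 2 := by exact_mod_cast h
    omega

end GaussianBase

section Separation

variable {b : ℂ} {M : ℤ} {f g : ℕ → ℤ}

lemma abs_le_of_mem_Icc_zero {x : ℤ} (hx : x ∈ Icc 0 M) : |x| ≤ M :=
  (abs_of_nonneg hx.1).trans_le hx.2

lemma abs_head_sub_le_one_of_piSum_eq (hb : 1 < ‖b‖)
    (hint : ∀ c : ℤ, (c : ℂ) ∈ digitSums b M → |c| ≤ 1)
    (hf : ∀ j, f j ∈ Icc 0 M) (hg : ∀ j, g j ∈ Icc 0 M) (h : piSum b f = piSum b g) :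
    |f 0 - g 0| ≤ 1 := by
  have hf' j := abs_le_of_mem_Icc_zero (hf j)
  have hg' j := abs_le_of_mem_Icc_zero (hg j)
  refine hint _ ⟨(fun j => g (j + 1)) - fun j => f (j + 1),
    fun j => abs_sub_le_of_nonneg_of_le (hg _).1 (hg _).2 (hf _).1 (hf _).2, ?_⟩
  rw [piSum_sub hb (fun j => hg' _) (fun j => hf' _)]
  have hf₁ := mul_piSum hb hf'
  have hg₁ := mul_piSum hb hg'
  push_cast
  linear_combination hf₁ - hg₁ - b * h

theorem eq_of_lt_of_piSum_eq (hb : 1 < ‖b‖)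
    (hint : ∀ c : ℤ, (c : ℂ) ∈ digitSums b M → |c| ≤ 1)
    {D : Set ℤ} (hsep : ∀ d ∈ D, ∀ d' ∈ D, |d - d'| ≠ 1) {k : ℕ}
    (hf : ∀ j, f j ∈ Icc 0 M) (hg : ∀ j, g j ∈ Icc 0 M)
    (hfD : ∀ j < k, f j ∈ D) (hgD : ∀ j < k, g j ∈ D) (h : piSum b f = piSum b g) :
    ∀ j < k, f j = g j := by
  induction k generalizing f g with
  | zero => simp
  | succ k ih =>
    have hhead : f 0 = g 0 := by
      have h1 := abs_head_sub_le_one_of_piSum_eq hb hint hf hg h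
      have h2 := hsep _ (hfD 0 k.succ_pos) _ (hgD 0 k.succ_pos)
      have : |f 0 - g 0| = 0 := by
        have := abs_nonneg (f 0 - g 0)
        omega
      exact sub_eq_zero.1 (abs_eq_zero.1 this)
    have htail : piSum b (fun j => f (j + 1)) = piSum b (fun j => g (j + 1)) := by
      have := mul_piSum hb fun j => abs_le_of_mem_Icc_zero (hg j)
      rw [← hhead, ← h, mul_piSum hb fun j => abs_le_of_mem_Icc_zero (hf j)] at this
      exact add_left_cancel this
    rintro (_ | j) hj
    · exact hhead
    · exact ih (fun j => hf _) (fun j => hg _) (fun j hj => hfD _ (by omega))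
        (fun j hj => hgD _ (by omega)) htail j (by omega)

end Separation

section Tiles

variable {k : ℕ}

def prependDigits (d : Fin k → ℤ) (e : ℕ → ℤ) (j : ℕ) : ℤ :=
  if h : j < k then d ⟨j, h⟩ else e (j - k)

lemma prependDigits_of_lt (d : Fin k → ℤ) (e : ℕ → ℤ) {j : ℕ} (hj : j < k) :
    prependDigits d e j = d ⟨j, hj⟩ :=
  dif_pos hj

lemma prependDigits_mem {s : Set ℤ} {d : Fin k → ℤ} {e : ℕ → ℤ} (hd : ∀ j, d j ∈ s)
    (he : ∀ j, e j ∈ s) (j : ℕ) : prependDigits d e j ∈ s := by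
  unfold prependDigits
  split_ifs
  exacts [hd _, he _]

lemma sum_add_zpow_mul_piSum {b : ℂ} {M : ℤ} (hb : 1 < ‖b‖) {d : Fin k → ℤ} {e : ℕ → ℤ}
    (hde : ∀ j, |prependDigits d e j| ≤ M) :
    (∑ j : Fin k, (d j : ℂ) * b ^ (-((j : ℤ) + 1))) + b ^ (-(k : ℤ)) * piSum b e
      = piSum b (prependDigits d e) := by
  rw [piSum_eq_sum_add_pow_mul hb hde k,
    ← Fin.sum_univ_eq_sum_range (fun j => (prependDigits d e j : ℂ) * b⁻¹ ^ (j + 1))]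
  congr 1
  · exact Finset.sum_congr rfl fun j _ => by
      rw [prependDigits_of_lt _ _ j.isLt, zpow_neg_natCast_add_one]
  · simp [prependDigits, zpow_neg, inv_pow]

end Tiles

theorem stmt_5_general (n : ℕ) (hn : 2 ≤ n) (D : Set ℤ)
    (hD : D ⊆ Set.Icc 0 ((n : ℤ) ^ 2))
    (hsep : ∀ d ∈ D, ∀ d' ∈ D, |d - d'| ≠ 1)
    (k : ℕ) (d d' : Fin k → ℤ)
    (hd : ∀ j, d j ∈ D) (hd' : ∀ j, d' j ∈ D)
    (hne : ∃ j, d j ≠ d' j) :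
    Disjoint (kTile (-(n : ℂ) + Complex.I) (fundTile n) k d)
      (kTile (-(n : ℂ) + Complex.I) (fundTile n) k d') := by
  have hb := one_lt_norm_base (n := n) (by omega)
  rw [Set.disjoint_left]
  rintro _ ⟨_, ⟨e, he, rfl⟩, rfl⟩ ⟨_, ⟨e', he', rfl⟩, h⟩
  have hE := prependDigits_mem (fun j => hD (hd j)) he
  have hE' := prependDigits_mem (fun j => hD (hd' j)) he'
  rw [sum_add_zpow_mul_piSum hb fun j => abs_le_of_mem_Icc_zero (hE j),
    sum_add_zpow_mul_piSum hb fun j => abs_le_of_mem_Icc_zero (hE' j)] at h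
  obtain ⟨j, hj⟩ := hne
  have := eq_of_lt_of_piSum_eq hb (fun _ => abs_le_one_of_intCast_mem_digitSums_base hn) hsep
    hE hE' (fun i hi => prependDigits_of_lt d e hi ▸ hd _)
    (fun i hi => prependDigits_of_lt d' e' hi ▸ hd' _) h j j.isLt
  rw [prependDigits_of_lt d e j.isLt, prependDigits_of_lt d' e' j.isLt] at this
  exact hj this

theorem stmt_5 (n : ℕ) (hn : 2 ≤ n) (D : Set ℤ)
    (hD : D ⊆ Set.Icc 0 ((n : ℤ) ^ 2))
    (hsep : ∀ d ∈ D, ∀ d' ∈ D, |d - d'| ≠ 1)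
    (k : ℕ) (hk : 1 ≤ k) (d d' : Fin k → ℤ)
    (hd : ∀ j, d j ∈ D) (hd' : ∀ j, d' j ∈ D)
    (hne : ∃ j, d j ≠ d' j) :
    Disjoint (kTile (-(n : ℂ) + Complex.I) (fundTile n) k d)
      (kTile (-(n : ℂ) + Complex.I) (fundTile n) k d') :=
  stmt_5_general n hn D hD hsep k d d' hd hd' hne
end

section
/- Fix an integer n ≥ 2, set b := -n + i, and let D ⊆ {0, 1, …, n²} with Δ := D − D. Let (α_j)_{j≥1} be a sequence with α_j ∈ Δ for all j, set α := π((α_j)), and assume the radix expansion of α in base (b, Δ) is unique: for every sequence (β_j)_{j≥1} with β_j ∈ Δ for all j and π((β_j)) = α, one has β_j = α_j for all j. Then C_{n,D} ∩ (C_{n,D} + α) = {π((z_j)) : z_j ∈ D ∩ (D + α_j) for all j}. -/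
/-!
For `|b| > 1`, digit sequences with values in a bounded set have absolutely summable expansions,
so `π` is additive on them. A point of `C ∩ (C + π α)` is `π d = π e + π α` with `d, e` in `D`;
then `π (d - e) = π α` with `d - e` in `Δ`, and uniqueness of the expansion forces `d - e = α`,
i.e. `d_j ∈ D ∩ (D + α_j)`. Conversely `π z = π (z - α) + π α`.
-/

open Complex Filter Pointwise

/-- The restricted digit set `C_{n,D}`. -/
def restrictedDigitSet (n : ℕ) (D : Set ℤ) : Set ℂ :=
  {z | ∃ d : ℕ → ℤ, (∀ j, d j ∈ D) ∧ z = piSum (-(n : ℂ) + Complex.I) d}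

open Bornology

lemma norm_digit_term (b : ℂ) (d : ℤ) (j : ℕ) :
    ‖(d : ℂ) * b ^ (-((j : ℤ) + 1))‖ = ‖d‖ * ‖b⁻¹‖ * ‖b⁻¹‖ ^ j := by
  rw [norm_mul, show -((j : ℤ) + 1) = -((j + 1 : ℕ) : ℤ) by push_cast; ring, zpow_neg,
    zpow_natCast, ← inv_pow, norm_pow, pow_succ', Complex.norm_intCast, Int.norm_eq_abs, mul_assoc]

lemma summable_piSum {b : ℂ} (hb : 1 < ‖b‖) {d : ℕ → ℤ} (hd : IsBounded (Set.range d)) :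
    Summable fun j : ℕ => (d j : ℂ) * b ^ (-((j : ℤ) + 1)) := by
  obtain ⟨C, hC⟩ := isBounded_iff_forall_norm_le.mp hd
  have hr : ‖b⁻¹‖ < 1 := by rw [norm_inv]; exact inv_lt_one_of_one_lt₀ hb
  refine Summable.of_norm_bounded
    ((summable_geometric_of_lt_one (norm_nonneg _) hr).mul_left (C * ‖b⁻¹‖)) fun j => ?_
  rw [norm_digit_term]
  gcongr
  exact hC _ (Set.mem_range_self j)

lemma piSum_sub_s14 {b : ℂ} (hb : 1 < ‖b‖) {d e : ℕ → ℤ} (hd : IsBounded (Set.range d))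
    (he : IsBounded (Set.range e)) : piSum b (d - e) = piSum b d - piSum b e := by
  simp only [piSum, Pi.sub_apply, Int.cast_sub, sub_mul]
  exact (summable_piSum hb hd).tsum_sub (summable_piSum hb he)

lemma one_lt_norm_neg_natCast_add_I {n : ℕ} (hn : 1 ≤ n) : 1 < ‖-(n : ℂ) + I‖ := by
  have hn' : (1 : ℝ) ≤ n := by exact_mod_cast hn
  rw [← one_lt_sq_iff₀ (norm_nonneg _), Complex.sq_norm, Complex.normSq_apply]
  simp only [add_re, neg_re, natCast_re, I_re, add_im, neg_im, natCast_im, I_im]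
  nlinarith

lemma isBounded_range_of_forall_mem {S : Set ℤ} (hS : IsBounded S) {d : ℕ → ℤ}
    (hd : ∀ j, d j ∈ S) : IsBounded (Set.range d) :=
  hS.subset (Set.range_subset_iff.mpr hd)

lemma Set.mem_add_singleton_iff {G : Type*} [AddGroup G] {x a : G} {S : Set G} :
    x ∈ S + {a} ↔ x - a ∈ S := by
  simp [Set.add_singleton, sub_eq_add_neg]

theorem stmt_14 (n : ℕ) (hn : 2 ≤ n) (D : Set ℤ)
    (hD : D ⊆ Set.Icc 0 ((n : ℤ) ^ 2))
    (α : ℕ → ℤ) (hα : ∀ j, α j ∈ D - D)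
    (huniq : ∀ β : ℕ → ℤ, (∀ j, β j ∈ D - D) →
      piSum (-(n : ℂ) + Complex.I) β = piSum (-(n : ℂ) + Complex.I) α →
      ∀ j, β j = α j) :
    restrictedDigitSet n D ∩
        (restrictedDigitSet n D + {piSum (-(n : ℂ) + Complex.I) α}) =
      {z | ∃ zs : ℕ → ℤ, (∀ j, zs j ∈ D ∩ (D + {α j})) ∧
        z = piSum (-(n : ℂ) + Complex.I) zs} := by
  have hb : 1 < ‖-(n : ℂ) + I‖ := one_lt_norm_neg_natCast_add_I (by omega)
  have hDb : IsBounded D := (Metric.isBounded_Icc _ _).subset hD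
  have hΔb : IsBounded (D - D) := isBounded_sub hDb hDb
  ext z
  simp only [restrictedDigitSet, Set.mem_inter_iff, Set.mem_ofPred_eq, Set.mem_add_singleton_iff]
  constructor
  · rintro ⟨⟨d, hd, rfl⟩, e, he, hde⟩
    have hdeD : ∀ j, (d - e) j ∈ D - D := fun j => Set.sub_mem_sub (hd j) (he j)
    have hα_eq : d - e = α := funext <| huniq _ hdeD <| by
      rw [piSum_sub_s14 hb (isBounded_range_of_forall_mem hDb hd)
        (isBounded_range_of_forall_mem hDb he), ← hde, sub_sub_cancel]
    refine ⟨d, fun j => ⟨hd j, ?_⟩, rfl⟩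
    simpa [← hα_eq] using he j
  · rintro ⟨zs, hzs, rfl⟩
    refine ⟨⟨zs, fun j => (hzs j).1, rfl⟩, zs - α, fun j => (hzs j).2, ?_⟩
    rw [piSum_sub_s14 hb (isBounded_range_of_forall_mem hDb fun j => (hzs j).1)
      (isBounded_range_of_forall_mem hΔb hα)]
end
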